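/- arXiv:1012.5251 — 2 statements merged into one kernel-verified Lean document; each statement's English description precedes it below -/
import Mathlib

section
/- Let n, m ≥ 1, N = n·m. Define P_{±,1/2} on Matrix (Fin N) (Fin N) ℂ by (P_{±,1/2} X)_{i,j} := ((1 ± sgn(j−i))/2)·X_{i,j}, P_A(ω) := P_{−,1/2}(ω·A) − P_{+,1/2}(ωᵀ·Aᵀ), and D_A(g) := A·g + gᵀ·A. Let A be block-upper-triangular with all diagonal m×m blocks A_{I,I} invertible, and let ω₁, ω₂ be block-lower-triangular (blocks (ω_i)_{I,J} = 0 for I < J) with Tr(A_{I,I}⁻¹·(ω_i)_{I,I}) = 0 for all I. Set g_i := P_A(ω_i) and L := g₁g₂ − g₂g₁ + P_{−,1/2}(ω₂·D_A(g₁)) − P_{+,1/2}(ω₂ᵀ·D_A(g₁)ᵀ) − P_{−,1/2}(ω₁·D_A(g₂)) + P_{+,1/2}(ω₁ᵀ·D_A(g₂)ᵀ). Then there exists a block-lower-triangular matrix ω ∈ Matrix (Fin N) (Fin N) ℂ such that L = P_A(ω). -/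
open Matrix

noncomputable section

/-- The sign of the difference of two indices, as a complex number
(`sgn : ℤ → ℤ` with `sgn 0 = 0`). -/
def fsgn {N : ℕ} (a b : Fin N) : ℂ := ((((a : ℕ) : ℤ) - ((b : ℕ) : ℤ)).sign : ℤ)

/-- The projection `P_{+,1/2}`. -/
def Pplus {N : ℕ} (X : Matrix (Fin N) (Fin N) ℂ) : Matrix (Fin N) (Fin N) ℂ :=
  fun i j => ((1 + fsgn j i) / 2) * X i j

/-- The projection `P_{−,1/2}`. -/
def Pminus {N : ℕ} (X : Matrix (Fin N) (Fin N) ℂ) : Matrix (Fin N) (Fin N) ℂ :=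
  fun i j => ((1 - fsgn j i) / 2) * X i j

/-- The map `P_A(ω) = P_{−,1/2}(ω·A) − P_{+,1/2}(ωᵀ·Aᵀ)`. -/
def PA {N : ℕ} (A ω : Matrix (Fin N) (Fin N) ℂ) : Matrix (Fin N) (Fin N) ℂ :=
  Pminus (ω * A) - Pplus (ωᵀ * Aᵀ)

/-- The anchor map `D_A(g) = A·g + gᵀ·A`. -/
def DA {N : ℕ} (A g : Matrix (Fin N) (Fin N) ℂ) : Matrix (Fin N) (Fin N) ℂ :=
  A * g + gᵀ * A

/-- `A` is block-upper-triangular with respect to `m × m` blocks. -/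
def IsBUT (n m : ℕ) (A : Matrix (Fin (n * m)) (Fin (n * m)) ℂ) : Prop :=
  ∀ i j : Fin (n * m), (j : ℕ) / m < (i : ℕ) / m → A i j = 0

/-- `ω` is block-lower-triangular with respect to `m × m` blocks. -/
def IsBLT (n m : ℕ) (ω : Matrix (Fin (n * m)) (Fin (n * m)) ℂ) : Prop :=
  ∀ i j : Fin (n * m), (i : ℕ) / m < (j : ℕ) / m → ω i j = 0

/-- The `(K,L)` block (of size `m × m`) of an `nm × nm` matrix. -/
def blk {n m : ℕ} (A : Matrix (Fin (n * m)) (Fin (n * m)) ℂ) (K L : Fin n) :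
    Matrix (Fin m) (Fin m) ℂ :=
  fun a b =>
    A ⟨K.val * m + a.val, by
        have ha := a.isLt
        have h2 : (K.val + 1) * m ≤ n * m := Nat.mul_le_mul_right m K.isLt
        have h3 : K.val * m + m = (K.val + 1) * m := by ring
        omega⟩
      ⟨L.val * m + b.val, by
        have hb := b.isLt
        have h2 : (L.val + 1) * m ≤ n * m := Nat.mul_le_mul_right m L.isLt
        have h3 : L.val * m + m = (L.val + 1) * m := by ring
        omega⟩

lemma sign_ite (d : ℤ) : d.sign = if 0 < d then 1 else if d < 0 then -1 else 0 := by
  rcases lt_trichotomy d 0 with h|h|h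
  · rw [Int.sign_eq_neg_one_of_neg h, if_neg (by omega), if_pos h]
  · simp [h]
  · rw [Int.sign_eq_one_of_pos h, if_pos h]

lemma sgn3 (x y z : ℤ) (h : ¬(x = y ∧ y = z)) :
    1 + (z - x).sign * (y - z).sign = (y - x).sign * ((z - x).sign + (y - z).sign) := by
  rw [sign_ite, sign_ite, sign_ite]
  split_ifs <;> first | (exfalso; omega) | norm_num

lemma fsgn_key {N : ℕ} (i j t : Fin N) (h : ¬(i = j ∧ j = t)) :
    1 + fsgn t i * fsgn j t = fsgn j i * (fsgn t i + fsgn j t) := by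
  have h' : ¬(((i:ℕ):ℤ) = ((j:ℕ):ℤ) ∧ ((j:ℕ):ℤ) = ((t:ℕ):ℤ)) := by
    simp only [Int.natCast_inj, Nat.cast_inj]
    intro ⟨h1,h2⟩
    exact h ⟨Fin.ext h1, Fin.ext h2⟩
  have := sgn3 ((i:ℕ):ℤ) ((j:ℕ):ℤ) ((t:ℕ):ℤ) h'
  unfold fsgn
  exact_mod_cast this

def Esgn {N : ℕ} (X : Matrix (Fin N) (Fin N) ℂ) : Matrix (Fin N) (Fin N) ℂ :=
  fun i j => fsgn j i * X i j

lemma fsgn_self {N : ℕ} (a : Fin N) : fsgn a a = 0 := by simp [fsgn]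

lemma fsgn_anti {N : ℕ} (a b : Fin N) : fsgn a b = - fsgn b a := by
  unfold fsgn
  rw [show ((a:ℕ):ℤ) - ((b:ℕ):ℤ) = -(((b:ℕ):ℤ) - ((a:ℕ):ℤ)) by ring, Int.sign_neg]
  push_cast
  ring

lemma Esgn_add {N : ℕ} (X Y : Matrix (Fin N) (Fin N) ℂ) :
    Esgn (X + Y) = Esgn X + Esgn Y := by
  ext i j; simp [Esgn]; ring

lemma Esgn_sub {N : ℕ} (X Y : Matrix (Fin N) (Fin N) ℂ) :
    Esgn (X - Y) = Esgn X - Esgn Y := by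
  ext i j; simp [Esgn]; ring

lemma Esgn_neg {N : ℕ} (X : Matrix (Fin N) (Fin N) ℂ) : Esgn (-X) = - Esgn X := by
  ext i j; simp [Esgn]

lemma Esgn_smul {N : ℕ} (c : ℂ) (X : Matrix (Fin N) (Fin N) ℂ) :
    Esgn (c • X) = c • Esgn X := by
  ext i j; simp [Esgn]; ring

lemma Esgn_transpose {N : ℕ} (X : Matrix (Fin N) (Fin N) ℂ) :
    Esgn (Xᵀ) = -(Esgn X)ᵀ := by
  ext i j
  simp only [Esgn, transpose_apply, Matrix.neg_apply]
  rw [fsgn_anti]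
  ring

lemma Pminus_eq {N : ℕ} (X : Matrix (Fin N) (Fin N) ℂ) :
    Pminus X = (2⁻¹ : ℂ) • (X - Esgn X) := by
  ext i j
  simp [Pminus, Esgn]
  ring

lemma Pplus_eq {N : ℕ} (X : Matrix (Fin N) (Fin N) ℂ) :
    Pplus X = (2⁻¹ : ℂ) • (X + Esgn X) := by
  ext i j
  simp [Pplus, Esgn]
  ring

lemma PA_eq {N : ℕ} (A ω : Matrix (Fin N) (Fin N) ℂ) :
    PA A ω = (2⁻¹ : ℂ) • (ω * A - (A * ω)ᵀ - Esgn (ω * A + (A * ω)ᵀ)) := by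
  rw [PA, Pminus_eq, Pplus_eq, show ωᵀ * Aᵀ = (A * ω)ᵀ by rw [transpose_mul],
    Esgn_add, Esgn_transpose]
  module

lemma mybe {N : ℕ} (X Y : Matrix (Fin N) (Fin N) ℂ) :
    X * Y - Y * X + Esgn X * Esgn Y - Esgn Y * Esgn X
      = Esgn (Esgn X * Y + X * Esgn Y - Esgn Y * X - Y * Esgn X) := by
  ext i j
  have lhs_eq : (X * Y - Y * X + Esgn X * Esgn Y - Esgn Y * Esgn X) i j
      = ∑ t, (X i t * Y t j - Y i t * X t j
          + fsgn t i * X i t * (fsgn j t * Y t j)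
          - fsgn t i * Y i t * (fsgn j t * X t j)) := by
    simp only [Esgn, Matrix.add_apply, Matrix.sub_apply, mul_apply, Finset.sum_add_distrib,
      Finset.sum_sub_distrib]
  have rhs_eq : (Esgn (Esgn X * Y + X * Esgn Y - Esgn Y * X - Y * Esgn X)) i j
      = ∑ t, (fsgn j i * (fsgn t i * X i t * Y t j)
          + fsgn j i * (X i t * (fsgn j t * Y t j))
          - fsgn j i * (fsgn t i * Y i t * X t j)
          - fsgn j i * (Y i t * (fsgn j t * X t j))) := by
    simp only [Esgn, Matrix.add_apply, Matrix.sub_apply, mul_apply, mul_sub, mul_add, Finset.mul_sum,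
      Finset.sum_add_distrib, Finset.sum_sub_distrib]
  rw [lhs_eq, rhs_eq]
  apply Finset.sum_congr rfl
  intro t _
  by_cases h : i = j ∧ j = t
  · obtain ⟨rfl, rfl⟩ := h
    simp [fsgn_self]
    ring
  · have hk := fsgn_key i j t h
    linear_combination (X i t * Y t j - Y i t * X t j) * hk

lemma mainB {N : ℕ} (A ω₁ ω₂ : Matrix (Fin N) (Fin N) ℂ) :
    PA A ω₁ * PA A ω₂ - PA A ω₂ * PA A ω₁
      + Pminus (ω₂ * DA A (PA A ω₁)) - Pplus (ω₂ᵀ * (DA A (PA A ω₁))ᵀ)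
      - Pminus (ω₁ * DA A (PA A ω₂)) + Pplus (ω₁ᵀ * (DA A (PA A ω₂))ᵀ)
      - PA A (PA A ω₁ * ω₂ + ω₂ * (PA A ω₁)ᵀ - PA A ω₂ * ω₁ - ω₁ * (PA A ω₂)ᵀ
          + ω₂ * A * ω₁ - ω₁ * A * ω₂)
    = (4⁻¹ : ℂ) • ((ω₁ * A + (A * ω₁)ᵀ) * (ω₂ * A + (A * ω₂)ᵀ)
        - (ω₂ * A + (A * ω₂)ᵀ) * (ω₁ * A + (A * ω₁)ᵀ)
        + Esgn (ω₁ * A + (A * ω₁)ᵀ) * Esgn (ω₂ * A + (A * ω₂)ᵀ)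
        - Esgn (ω₂ * A + (A * ω₂)ᵀ) * Esgn (ω₁ * A + (A * ω₁)ᵀ)
        - Esgn (Esgn (ω₁ * A + (A * ω₁)ᵀ) * (ω₂ * A + (A * ω₂)ᵀ)
            + (ω₁ * A + (A * ω₁)ᵀ) * Esgn (ω₂ * A + (A * ω₂)ᵀ)
            - Esgn (ω₂ * A + (A * ω₂)ᵀ) * (ω₁ * A + (A * ω₁)ᵀ)
            - (ω₂ * A + (A * ω₂)ᵀ) * Esgn (ω₁ * A + (A * ω₁)ᵀ))) := by
  simp only [PA_eq, Pminus_eq, Pplus_eq, DA, Esgn_add, Esgn_sub, Esgn_neg, Esgn_smul,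
    Esgn_transpose, transpose_add, transpose_sub, transpose_neg, transpose_smul,
    transpose_transpose, transpose_mul, smul_add, smul_sub, smul_neg, smul_smul,
    mul_add, add_mul, mul_sub, sub_mul, neg_mul, mul_neg, neg_neg,
    smul_mul_assoc, mul_smul_comm, mul_assoc]
  module

lemma main_identity {N : ℕ} (A ω₁ ω₂ : Matrix (Fin N) (Fin N) ℂ) :
    PA A ω₁ * PA A ω₂ - PA A ω₂ * PA A ω₁
      + Pminus (ω₂ * DA A (PA A ω₁)) - Pplus (ω₂ᵀ * (DA A (PA A ω₁))ᵀ)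
      - Pminus (ω₁ * DA A (PA A ω₂)) + Pplus (ω₁ᵀ * (DA A (PA A ω₂))ᵀ)
    = PA A (PA A ω₁ * ω₂ + ω₂ * (PA A ω₁)ᵀ - PA A ω₂ * ω₁ - ω₁ * (PA A ω₂)ᵀ
        + ω₂ * A * ω₁ - ω₁ * A * ω₂) := by
  rw [← sub_eq_zero, mainB A ω₁ ω₂,
    sub_eq_zero.mpr (mybe (ω₁ * A + (A * ω₁)ᵀ) (ω₂ * A + (A * ω₂)ᵀ)), smul_zero]

lemma PA_add {N : ℕ} (A X Y : Matrix (Fin N) (Fin N) ℂ) :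
    PA A (X + Y) = PA A X + PA A Y := by
  ext i j
  simp [PA, Pminus, Pplus, add_mul, Matrix.mul_apply, Finset.sum_add_distrib]
  ring

lemma fsgn_pos {N : ℕ} {a b : Fin N} (h : (b:ℕ) < (a:ℕ)) : fsgn a b = 1 := by
  unfold fsgn
  rw [Int.sign_eq_one_of_pos (by omega)]
  norm_num

lemma fsgn_neg' {N : ℕ} {a b : Fin N} (h : (a:ℕ) < (b:ℕ)) : fsgn a b = -1 := by
  unfold fsgn
  rw [Int.sign_eq_neg_one_of_neg (by omega)]
  norm_num

/-- closedness of the space of sections of the Lie algebroid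
`𝔤 = Im(P_A)`: the algebroid bracket `L` of two (constant) sections `ω₁, ω₂`
again lies in the image of `P_A` on block-lower-triangular matrices. -/
theorem algebroid_sections_closed (n m : ℕ) (hn : 1 ≤ n) (hm : 1 ≤ m)
    (A ω₁ ω₂ : Matrix (Fin (n * m)) (Fin (n * m)) ℂ)
    (hA : IsBUT n m A)
    (hdiag : ∀ I : Fin n, IsUnit (blk A I I).det)
    (hω₁ : IsBLT n m ω₁) (hω₂ : IsBLT n m ω₂)
    (htr₁ : ∀ I : Fin n, ((blk A I I)⁻¹ * blk ω₁ I I).trace = 0)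
    (htr₂ : ∀ I : Fin n, ((blk A I I)⁻¹ * blk ω₂ I I).trace = 0) :
    ∃ ω : Matrix (Fin (n * m)) (Fin (n * m)) ℂ, IsBLT n m ω ∧
      PA A ω₁ * PA A ω₂ - PA A ω₂ * PA A ω₁
        + Pminus (ω₂ * DA A (PA A ω₁)) - Pplus (ω₂ᵀ * (DA A (PA A ω₁))ᵀ)
        - Pminus (ω₁ * DA A (PA A ω₂)) + Pplus (ω₁ᵀ * (DA A (PA A ω₂))ᵀ)
      = PA A ω := by
  set W : Matrix (Fin (n * m)) (Fin (n * m)) ℂ :=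
    PA A ω₁ * ω₂ + ω₂ * (PA A ω₁)ᵀ - PA A ω₂ * ω₁ - ω₁ * (PA A ω₂)ᵀ
      + ω₂ * A * ω₁ - ω₁ * A * ω₂ with hW
  set ω : Matrix (Fin (n * m)) (Fin (n * m)) ℂ :=
    Matrix.of fun i j => if (i : ℕ) / m < (j : ℕ) / m then 0 else W i j with hω
  set U : Matrix (Fin (n * m)) (Fin (n * m)) ℂ :=
    Matrix.of fun i j => if (i : ℕ) / m < (j : ℕ) / m then W i j else 0 with hU
  have hUblt : ∀ i k : Fin (n * m), ¬ ((i : ℕ) / m < (k : ℕ) / m) → U i k = 0 := by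
    intro i k h
    simp [hU, h]
  -- U * A is strictly upper triangular (entrywise)
  have hUA : ∀ i j : Fin (n * m), ¬ ((i : ℕ) < (j : ℕ)) → (U * A) i j = 0 := by
    intro i j hij
    rw [Matrix.mul_apply]
    apply Finset.sum_eq_zero
    intro k _
    by_cases hk : (i : ℕ) / m < (k : ℕ) / m
    · have hAkj : A k j = 0 := by
        apply hA
        have h1 : (j : ℕ) / m ≤ (i : ℕ) / m := Nat.div_le_div_right (by omega)
        omega
      rw [hAkj, mul_zero]
    · rw [hUblt i k hk, zero_mul]
  -- A * U is strictly upper triangular (entrywise)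
  have hAU : ∀ i j : Fin (n * m), ¬ ((i : ℕ) < (j : ℕ)) → (A * U) i j = 0 := by
    intro i j hij
    rw [Matrix.mul_apply]
    apply Finset.sum_eq_zero
    intro k _
    by_cases hk : (k : ℕ) / m < (j : ℕ) / m
    · have hAik : A i k = 0 := by
        apply hA
        have h1 : (j : ℕ) / m ≤ (i : ℕ) / m := Nat.div_le_div_right (by omega)
        omega
      rw [hAik, zero_mul]
    · rw [hUblt k j hk, mul_zero]
  have hPAU : PA A U = 0 := by
    ext i j
    simp only [PA, Pminus, Pplus, Matrix.sub_apply, Matrix.zero_apply]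
    by_cases hij : (i : ℕ) < (j : ℕ)
    · rw [fsgn_pos hij]
      have h2 : (Uᵀ * Aᵀ) i j = (A * U) j i := by
        rw [← transpose_mul, transpose_apply]
      rw [h2, hAU j i (by omega)]
      ring
    · rw [hUA i j hij]
      by_cases hji : (j : ℕ) < (i : ℕ)
      · rw [fsgn_neg' hji]
        ring
      · have h2 : (Uᵀ * Aᵀ) i j = (A * U) j i := by
          rw [← transpose_mul, transpose_apply]
        rw [h2, hAU j i (by omega)]
        ring
  have hsplit : W = ω + U := by
    ext i j
    by_cases h : (i : ℕ) / m < (j : ℕ) / m <;> simp [hω, hU, h]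
  refine ⟨ω, ?_, ?_⟩
  · intro i j h
    simp [hω, h]
  · rw [main_identity A ω₁ ω₂, ← hW, hsplit, PA_add, hPAU, add_zero]
end
end

section
/- Let n ≥ 2, m ≥ 1, N = n·m, and let A ∈ Matrix (Fin N) (Fin N) ℂ be block-upper-triangular with all diagonal m×m blocks invertible. With β_{J,J+1}(A) := B_{J,J+1}(A)·A·B_{J,J+1}(A)ᵀ as in the braid group action (B_{J,J+1}(A) is the identity except in block rows/columns J, J+1 where it equals [[A_{J,J+1}ᵀ·A_{J,J}^{−T}, −𝟙_m],[A_{J,J}·A_{J,J}^{−T}, 0]]), let Φ := β_{n−1,n} ∘ ⋯ ∘ β_{2,3} ∘ β_{1,2}. Then the n-fold composition Φ^n satisfies, for all block indices I ≤ J: (Φ^n(A))_{I,J} = (A_{I,I}·A_{I,I}^{−T})^{n−2} · A_{I,J} · (A_{J,J}⁻¹·A_{J,J}ᵀ)^{n−2}; in particular (Φ^n(A))_{I,I} = A_{I,I} for every I and every n. -/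
/-!
Each move `β_{J,J+1}` is a congruence `M ↦ B M Bᵀ`, so `Φ(A) = G A Gᵀ` with `G` the product of
the `n - 1` braid matrices of the sweep. Writing `P = A₀₀` (block indices start at `0`), `G`
replaces block row `K < n - 1` by `A₀,K+1ᵀ P⁻ᵀ R₀ - R_{K+1}` and the last block row by
`(P P⁻ᵀ)ⁿ⁻¹ R₀`. For block-upper-triangular `A` this makes `Φ` a cyclic shift of the block
indices: `Φ(A)_{K,L} = A_{K+1,L+1}` for `K, L < n - 1`, the pivot `P` moves to the lower right
corner, and the first block row, transposed and multiplied by `(P⁻¹ Pᵀ)ⁿ⁻²`, becomes the last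
block column. Hence `Φᵏ(A)` is the `n × n` window at offset `k` of a `2n × 2n` block array built
from `A`. At `k = n` every block `A_IJ` has been transposed twice, picking up the factors
`(A_II A_II⁻ᵀ)ⁿ⁻²` on the left and `(A_JJ⁻¹ A_JJᵀ)ⁿ⁻²` on the right.
-/

open Matrix

noncomputable section

/-- The block index of a global index. -/
def blkIdx {n m : ℕ} (hm : 0 < m) (i : Fin (n * m)) : Fin n :=
  ⟨(i : ℕ) / m, (Nat.div_lt_iff_lt_mul hm).mpr i.isLt⟩

/-- The position of a global index inside its block. -/
def inIdx {n m : ℕ} (hm : 0 < m) (i : Fin (n * m)) : Fin m :=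
  ⟨(i : ℕ) % m, Nat.mod_lt _ hm⟩

/-- The braid-group matrix `B_{I,I+1}(A)`. -/
def braidB {n m : ℕ} (hm : 0 < m) (I I' : Fin n)
    (A : Matrix (Fin (n * m)) (Fin (n * m)) ℂ) : Matrix (Fin (n * m)) (Fin (n * m)) ℂ :=
  fun i j =>
    (if blkIdx hm i = I ∧ blkIdx hm j = I then (blk A I I')ᵀ * ((blk A I I)ᵀ)⁻¹
      else if blkIdx hm i = I ∧ blkIdx hm j = I' then -1
      else if blkIdx hm i = I' ∧ blkIdx hm j = I then blk A I I * ((blk A I I)ᵀ)⁻¹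
      else if blkIdx hm i = I' ∧ blkIdx hm j = I' then 0
      else if blkIdx hm i = blkIdx hm j then 1 else 0)
    (inIdx hm i) (inIdx hm j)

/-- The braid-group action `β_{I,I+1}(A) = B_{I,I+1}(A)·A·B_{I,I+1}(A)ᵀ`. -/
def braidAct {n m : ℕ} (hm : 0 < m) (I I' : Fin n)
    (A : Matrix (Fin (n * m)) (Fin (n * m)) ℂ) : Matrix (Fin (n * m)) (Fin (n * m)) ℂ :=
  braidB hm I I' A * A * (braidB hm I I' A)ᵀ

/-- The composition `Φ = β_{n−1,n} ∘ ⋯ ∘ β_{2,3} ∘ β_{1,2}` (applying `β_{1,2}` first). -/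
def phiMap (n m : ℕ) (hm : 0 < m) (A : Matrix (Fin (n * m)) (Fin (n * m)) ℂ) :
    Matrix (Fin (n * m)) (Fin (n * m)) ℂ :=
  Fin.foldl (n - 1)
    (fun M J => braidAct hm
      ⟨J.val, by have := J.isLt; omega⟩ ⟨J.val + 1, by have := J.isLt; omega⟩ M) A

theorem pow_mul_mul_pow_of_mul_mul_eq {M : Type*} [Monoid M] {a x b : M} (h : a * x * b = x)
    (j : ℕ) : a ^ j * x * b ^ j = x := by
  induction j with
  | zero => simp
  | succ j ih =>
    calc a ^ (j + 1) * x * b ^ (j + 1) = a ^ j * (a * x * b) * b ^ j := by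
          rw [pow_succ, pow_succ']; simp only [mul_assoc]
      _ = x := by rw [h, ih]

namespace Matrix

variable {ι R : Type*} [Fintype ι] [DecidableEq ι] [CommRing R] (P : Matrix ι ι R)

theorem transpose_pow_mul_transpose_nonsing_inv (j : ℕ) :
    ((P * Pᵀ⁻¹) ^ j)ᵀ = (P⁻¹ * Pᵀ) ^ j := by
  rw [transpose_pow, transpose_mul, transpose_nonsing_inv, transpose_transpose]

theorem transpose_pow_nonsing_inv_mul_transpose (j : ℕ) :
    ((P⁻¹ * Pᵀ) ^ j)ᵀ = (P * Pᵀ⁻¹) ^ j := by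
  rw [transpose_pow, transpose_mul, transpose_nonsing_inv, transpose_transpose]

variable {P}

theorem pow_mul_transpose_nonsing_inv_mul_mul_pow (hP : IsUnit P.det) (j : ℕ) :
    (P * Pᵀ⁻¹) ^ j * P * (P⁻¹ * Pᵀ) ^ j = P := by
  have hPt : IsUnit Pᵀ.det := by rwa [det_transpose]
  refine pow_mul_mul_pow_of_mul_mul_eq ?_ j
  simp only [mul_assoc, mul_nonsing_inv_cancel_left _ _ hP, nonsing_inv_mul _ hPt, mul_one]

theorem pow_nonsing_inv_mul_transpose_mul_mul_pow (hP : IsUnit P.det) (j : ℕ) :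
    (P⁻¹ * Pᵀ) ^ j * Pᵀ⁻¹ * (P * Pᵀ⁻¹) ^ j = Pᵀ⁻¹ := by
  have hPt : IsUnit Pᵀ.det := by rwa [det_transpose]
  refine pow_mul_mul_pow_of_mul_mul_eq ?_ j
  simp only [mul_assoc, mul_nonsing_inv_cancel_left _ _ hPt, nonsing_inv_mul_cancel_left _ _ hP]

theorem transpose_nonsing_inv_mul_mul_pow_succ (hP : IsUnit P.det) (j : ℕ) :
    Pᵀ⁻¹ * (P * (P⁻¹ * Pᵀ) ^ (j + 1)) = (P⁻¹ * Pᵀ) ^ j := by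
  have hPt : IsUnit Pᵀ.det := by rwa [det_transpose]
  rw [pow_succ', mul_assoc, mul_nonsing_inv_cancel_left _ _ hP,
    nonsing_inv_mul_cancel_left _ _ hPt]

end Matrix

open Fin.NatCast

section Blocks

variable {n m : ℕ}

theorem blk_apply (A : Matrix (Fin (n * m)) (Fin (n * m)) ℂ) (K L : Fin n) (a b : Fin m) :
    blk A K L a b = A (finProdFinEquiv (K, a)) (finProdFinEquiv (L, b)) := by
  simp only [blk]
  congr 2 <;> ring

theorem blkIdx_finProdFinEquiv (hm : 0 < m) (K : Fin n) (a : Fin m) :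
    blkIdx hm (finProdFinEquiv (K, a)) = K := by
  ext
  simp [blkIdx, finProdFinEquiv, Nat.add_mul_div_left _ _ hm, Nat.div_eq_of_lt a.isLt]

theorem inIdx_finProdFinEquiv (hm : 0 < m) (K : Fin n) (a : Fin m) :
    inIdx hm (finProdFinEquiv (K, a)) = a := by
  ext
  simp [inIdx, finProdFinEquiv, Nat.mod_eq_of_lt a.isLt]

theorem blk_mul (X Y : Matrix (Fin (n * m)) (Fin (n * m)) ℂ) (K L : Fin n) :
    blk (X * Y) K L = ∑ J, blk X K J * blk Y J L := by
  ext a b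
  simp only [blk_apply, mul_apply, Matrix.sum_apply]
  rw [← finProdFinEquiv.sum_comp, Fintype.sum_prod_type]

theorem blk_transpose (X : Matrix (Fin (n * m)) (Fin (n * m)) ℂ) (K L : Fin n) :
    blk Xᵀ K L = (blk X L K)ᵀ := rfl

theorem blk_braidB (hm : 0 < m) (J J' K L : Fin n) (M : Matrix (Fin (n * m)) (Fin (n * m)) ℂ) :
    blk (braidB hm J J' M) K L =
      if K = J ∧ L = J then (blk M J J')ᵀ * ((blk M J J)ᵀ)⁻¹
      else if K = J ∧ L = J' then -1
      else if K = J' ∧ L = J then blk M J J * ((blk M J J)ᵀ)⁻¹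
      else if K = J' ∧ L = J' then 0
      else if K = L then 1 else 0 := by
  ext a b
  simp only [blk_apply, braidB, blkIdx_finProdFinEquiv, inIdx_finProdFinEquiv]

theorem blk_eq_zero_of_isBUT (hm : 0 < m) {A : Matrix (Fin (n * m)) (Fin (n * m)) ℂ}
    (hA : IsBUT n m A) {K L : Fin n} (hLK : L < K) : blk A K L = 0 := by
  ext a b
  rw [blk_apply]
  refine hA _ _ ?_
  have := congrArg Fin.val (blkIdx_finProdFinEquiv hm K a)
  have := congrArg Fin.val (blkIdx_finProdFinEquiv hm L b)
  simp only [blkIdx] at *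
  omega

theorem blk_braidB_mul (hm : 0 < m) {J J' : Fin n} (hJ : J ≠ J')
    (M X : Matrix (Fin (n * m)) (Fin (n * m)) ℂ) (K L : Fin n) :
    blk (braidB hm J J' M * X) K L =
      if K = J then (blk M J J')ᵀ * ((blk M J J)ᵀ)⁻¹ * blk X J L - blk X J' L
      else if K = J' then blk M J J * ((blk M J J)ᵀ)⁻¹ * blk X J L
      else blk X K L := by
  rw [blk_mul]
  simp only [blk_braidB, ite_mul, one_mul, zero_mul, neg_one_mul]
  by_cases hKJ : K = J
  · subst hKJ
    rw [Fintype.sum_eq_add K J' hJ fun x hx => by simp [hx.1, hx.2, hJ, Ne.symm hx.1]]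
    simp [Ne.symm hJ, sub_eq_add_neg]
  by_cases hKJ' : K = J'
  · subst hKJ'
    rw [Fintype.sum_eq_single J fun x hx => by
      rcases eq_or_ne x K with rfl | hxK
      · simp [hx]
      · simp [hx, hKJ, hxK.symm]]
    simp [hKJ]
  · rw [Fintype.sum_eq_single K fun x hx => by simp [hKJ, hKJ', Ne.symm hx]]
    simp [hKJ, hKJ']

end Blocks

section Sweep

variable {n m : ℕ} [NeZero n] (hm : 0 < m)

def sweepMat (A : Matrix (Fin (n * m)) (Fin (n * m)) ℂ) : ℕ → Matrix (Fin (n * m)) (Fin (n * m)) ℂ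
  | 0 => 1
  | k + 1 =>
    braidB hm k (k + 1) (sweepMat A k * A * (sweepMat A k)ᵀ) * sweepMat A k

theorem foldl_braidAct_eq_sweepMat (A : Matrix (Fin (n * m)) (Fin (n * m)) ℂ) (k : ℕ) :
    Fin.foldl k (fun M (J : Fin k) => braidAct hm (J : ℕ) ((J : ℕ) + 1) M) A =
      sweepMat hm A k * A * (sweepMat hm A k)ᵀ := by
  induction k with
  | zero => simp [sweepMat]
  | succ k ih =>
    rw [Fin.foldl_succ_last]
    simp only [Fin.val_last, Fin.val_castSucc]
    rw [ih]
    simp only [braidAct, sweepMat, transpose_mul, mul_assoc]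

theorem phiMap_eq_sweepMat (A : Matrix (Fin (n * m)) (Fin (n * m)) ℂ) :
    phiMap n m hm A = sweepMat hm A (n - 1) * A * (sweepMat hm A (n - 1))ᵀ := by
  rw [← foldl_braidAct_eq_sweepMat]
  refine congrArg (fun f => Fin.foldl (n - 1) f A) (funext₂ fun M J => ?_)
  have e0 : ((J : ℕ) : Fin n) = ⟨J, by omega⟩ := Fin.ext (Fin.val_cast_of_lt (by omega))
  have e1 : (((J : ℕ) + 1 : ℕ) : Fin n) = ⟨J + 1, by omega⟩ :=
    Fin.ext (Fin.val_cast_of_lt (by omega))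
  rw [e0, e1]

theorem blk_sweepMat_mul (A : Matrix (Fin (n * m)) (Fin (n * m)) ℂ) (hP : IsUnit (blk A 0 0).det)
    {k : ℕ} (hk : k < n) (X : Matrix (Fin (n * m)) (Fin (n * m)) ℂ) (K L : Fin n) :
    blk (sweepMat hm A k * X) K L =
      if (K : ℕ) < k then (blk A 0 (K + 1))ᵀ * (blk A 0 0)ᵀ⁻¹ * blk X 0 L - blk X (K + 1) L
      else if (K : ℕ) = k then (blk A 0 0 * (blk A 0 0)ᵀ⁻¹) ^ k * blk X 0 L
      else blk X K L := by
  induction k generalizing X K L with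
  | zero =>
    simp only [sweepMat, one_mul, Nat.not_lt_zero, if_false, pow_zero]
    split_ifs with hK
    · rw [show K = 0 from Fin.ext hK]
    · rfl
  | succ k ih =>
    set P := blk A 0 0
    set G := sweepMat hm A k
    have hkk : ((k : Fin n) : ℕ) = k := Fin.val_cast_of_lt (by omega)
    have hk1 : (((k : Fin n) + 1 : Fin n) : ℕ) = k + 1 := by
      rw [← Nat.cast_succ, Fin.val_cast_of_lt hk]
    have hne : (k : Fin n) ≠ k + 1 := fun h => by
      have := congrArg Fin.val h; omega
    -- The braid matrix of move `k` reads only the blocks `(k, k)` and `(k, k + 1)`.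
    have row : ∀ L, blk (G * A * Gᵀ) k L = (P * Pᵀ⁻¹) ^ k * (blk (G * Aᵀ) L 0)ᵀ := by
      intro L
      rw [mul_assoc, ih (by omega), if_neg (by omega), if_pos hkk,
        show A * Gᵀ = (G * Aᵀ)ᵀ by rw [transpose_mul, transpose_transpose], blk_transpose]
    have pivot : blk (G * A * Gᵀ) k k = P := by
      rw [row, ih (by omega), if_neg (by omega), if_pos hkk, transpose_mul, blk_transpose,
        transpose_transpose, transpose_pow_mul_transpose_nonsing_inv, ← mul_assoc,
        pow_mul_transpose_nonsing_inv_mul_mul_pow hP]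
    have next : blk (G * A * Gᵀ) k (k + 1) = (P * Pᵀ⁻¹) ^ k * blk A 0 (k + 1) := by
      rw [row, ih (by omega), if_neg (by omega), if_neg (by omega), blk_transpose,
        transpose_transpose]
    rw [sweepMat, Nat.cast_succ, mul_assoc, blk_braidB_mul hm hne, pivot, next, ih (by omega),
      ih (by omega), ih (by omega)]
    by_cases hK : K = k
    · subst hK
      simp only [hne, hkk, hk1, lt_irrefl, if_true, if_false, show k < k + 1 by omega,
        show ¬ k + 1 < k by omega, show k + 1 ≠ k by omega, transpose_mul,
        transpose_pow_mul_transpose_nonsing_inv]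
      congr 1
      calc _ = (blk A 0 (k + 1))ᵀ * ((P⁻¹ * Pᵀ) ^ k * Pᵀ⁻¹ * (P * Pᵀ⁻¹) ^ k) * blk X 0 L := by
            simp only [mul_assoc]
        _ = _ := by rw [pow_nonsing_inv_mul_transpose_mul_mul_pow hP]
    by_cases hK' : K = k + 1
    · subst hK'
      simp only [hne.symm, hkk, hk1, lt_irrefl, if_false, if_true, pow_succ', mul_assoc]
    have hKk : (K : ℕ) ≠ k := fun h => hK (Fin.ext (h.trans hkk.symm))
    have hKk1 : (K : ℕ) ≠ k + 1 := fun h => hK' (Fin.ext (h.trans hk1.symm))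
    simp only [hK, hK', if_false]
    split_ifs <;> first | rfl | omega

theorem blk_mul_transpose_sweepMat (A : Matrix (Fin (n * m)) (Fin (n * m)) ℂ)
    (hP : IsUnit (blk A 0 0).det) {k : ℕ} (hk : k < n) (X : Matrix (Fin (n * m)) (Fin (n * m)) ℂ)
    (K L : Fin n) :
    blk (X * (sweepMat hm A k)ᵀ) K L =
      if (L : ℕ) < k then blk X K 0 * (blk A 0 0)⁻¹ * blk A 0 (L + 1) - blk X K (L + 1)
      else if (L : ℕ) = k then blk X K 0 * ((blk A 0 0)⁻¹ * (blk A 0 0)ᵀ) ^ k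
      else blk X K L := by
  rw [← transpose_transpose X, ← transpose_mul, blk_transpose, blk_sweepMat_mul hm A hP hk]
  split_ifs <;>
    simp only [transpose_sub, transpose_mul, transpose_transpose, blk_transpose,
      transpose_nonsing_inv, transpose_pow_mul_transpose_nonsing_inv, mul_assoc]

theorem blk_phiMap (A : Matrix (Fin (n * m)) (Fin (n * m)) ℂ)
    (hcol : ∀ K : Fin n, K ≠ 0 → blk A K 0 = 0) (hP : IsUnit (blk A 0 0).det) (K L : Fin n) :
    blk (phiMap n m hm A) K L =
      if (K : ℕ) + 1 < n then
        if (L : ℕ) + 1 < n then blk A (K + 1) (L + 1)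
        else (blk A 0 (K + 1))ᵀ * ((blk A 0 0)⁻¹ * (blk A 0 0)ᵀ) ^ (n - 2)
      else if (L : ℕ) + 1 < n then 0 else blk A 0 0 := by
  have hn : n - 1 < n := Nat.sub_lt (NeZero.pos n) one_pos
  have hcolK (hK : (K : ℕ) + 1 < n) : blk A (K + 1) 0 = 0 :=
    hcol _ fun h => by
      have := congrArg Fin.val h
      rw [Fin.val_add_one_of_lt' hK, Fin.val_zero] at this
      omega
  rw [phiMap_eq_sweepMat, mul_assoc, blk_sweepMat_mul hm A hP hn]
  simp only [blk_mul_transpose_sweepMat hm A hP hn]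
  by_cases hK : (K : ℕ) + 1 < n <;> by_cases hL : (L : ℕ) + 1 < n <;>
    simp only [hK, hL, if_true, if_false]
  · simp only [if_pos (show (K : ℕ) < n - 1 by omega), if_pos (show (L : ℕ) < n - 1 by omega),
      hcolK hK, mul_nonsing_inv _ hP, one_mul, sub_self, zero_mul, mul_zero, zero_sub,
      sub_neg_eq_add, zero_add]
  · simp only [if_pos (show (K : ℕ) < n - 1 by omega), if_neg (show ¬ (L : ℕ) < n - 1 by omega),
      if_pos (show (L : ℕ) = n - 1 by omega), hcolK hK, zero_mul, sub_zero, mul_assoc]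
    rw [show n - 1 = n - 2 + 1 by omega, transpose_nonsing_inv_mul_mul_pow_succ hP]
  · simp only [if_neg (show ¬ (K : ℕ) < n - 1 by omega), if_pos (show (K : ℕ) = n - 1 by omega),
      if_pos (show (L : ℕ) < n - 1 by omega), mul_nonsing_inv _ hP, one_mul, sub_self, mul_zero]
  · simp only [if_neg (show ¬ (K : ℕ) < n - 1 by omega), if_pos (show (K : ℕ) = n - 1 by omega),
      if_neg (show ¬ (L : ℕ) < n - 1 by omega), if_pos (show (L : ℕ) = n - 1 by omega),
      ← mul_assoc, pow_mul_transpose_nonsing_inv_mul_mul_pow hP]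

/-- Block `(i, j)`, `i, j < 2n`, of the block array whose `n × n` window at offset `k` is `Φᵏ(A)`;
the indices are coerced to `Fin n`, that is, reduced mod `n`. -/
def extBlk (A : Matrix (Fin (n * m)) (Fin (n * m)) ℂ) (i j : ℕ) : Matrix (Fin m) (Fin m) ℂ :=
  if j < i then 0
  else if j < n then blk A i j
  else if i < n then (blk A j i)ᵀ * ((blk A j j)⁻¹ * (blk A j j)ᵀ) ^ (n - 2)
  else (blk A i i * (blk A i i)ᵀ⁻¹) ^ (n - 2) * blk A i j * ((blk A j j)⁻¹ * (blk A j j)ᵀ) ^ (n - 2)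

theorem blk_iterate_phiMap (A : Matrix (Fin (n * m)) (Fin (n * m)) ℂ)
    (hA : ∀ K L : Fin n, L < K → blk A K L = 0) (hdiag : ∀ J : Fin n, IsUnit (blk A J J).det)
    {k : ℕ} (hk : k ≤ n) (K L : Fin n) :
    blk ((phiMap n m hm)^[k] A) K L = extBlk A (K + k) (L + k) := by
  induction k generalizing K L with
  | zero =>
    simp only [Function.iterate_zero, id, add_zero, extBlk, Fin.cast_val_eq_self, if_pos L.isLt]
    split_ifs with h
    · exact hA K L h
    · rfl
  | succ k ih =>
    set M := (phiMap n m hm)^[k] A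
    have hM := ih (by omega)
    have hkk : ((k : Fin n) : ℕ) = k := Fin.val_cast_of_lt (by omega)
    have hM00 : blk M 0 0 = blk A k k := by
      rw [hM, extBlk, Fin.val_zero, zero_add, if_neg (lt_irrefl k), if_pos (by omega)]
    have hcol (K : Fin n) (hK : K ≠ 0) : blk M K 0 = 0 := by
      rw [hM, extBlk, if_pos]
      have := Fin.pos_iff_ne_zero.2 hK
      simp only [Fin.val_zero]
      omega
    rw [Function.iterate_succ_apply', blk_phiMap hm M hcol (hM00 ▸ hdiag _)]
    have hcast : ((n + k : ℕ) : Fin n) = k := by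
      rw [Nat.cast_add, Fin.natCast_self, zero_add]
    by_cases hK : (K : ℕ) + 1 < n <;> by_cases hL : (L : ℕ) + 1 < n <;>
      simp only [hK, hL, if_true, if_false]
    · rw [hM, Fin.val_add_one_of_lt' hK, Fin.val_add_one_of_lt' hL]
      congr 1 <;> omega
    · rw [hM, hM00, Fin.val_add_one_of_lt' hK, Fin.val_zero, zero_add,
        show (L : ℕ) + (k + 1) = n + k by omega, show (K : ℕ) + 1 + k = K + (k + 1) by omega]
      simp only [extBlk, if_neg (show ¬ (K : ℕ) + (k + 1) < k by omega),
        if_neg (show ¬ n + k < (K : ℕ) + (k + 1) by omega), if_neg (show ¬ n + k < n by omega),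
        hcast]
      by_cases h : (K : ℕ) + (k + 1) < n
      · simp only [if_pos h]
      · simp only [if_neg h, if_pos (show k < n by omega), transpose_mul, transpose_transpose,
          transpose_pow_nonsing_inv_mul_transpose]
    · rw [extBlk, if_pos (by omega)]
    · rw [hM00, show (K : ℕ) + (k + 1) = n + k by omega, show (L : ℕ) + (k + 1) = n + k by omega,
        extBlk, if_neg (lt_irrefl _), if_neg (show ¬ n + k < n by omega),
        if_neg (show ¬ n + k < n by omega), hcast,
        pow_mul_transpose_nonsing_inv_mul_mul_pow (hdiag _)]

end Sweep

theorem total_braid_action_general (n m : ℕ) (hm : 1 ≤ m)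
    (A : Matrix (Fin (n * m)) (Fin (n * m)) ℂ) (hA : IsBUT n m A)
    (hdiag : ∀ J : Fin n, IsUnit (blk A J J).det) :
    (∀ I J : Fin n, I ≤ J →
        blk ((phiMap n m hm)^[n] A) I J
          = (blk A I I * ((blk A I I)ᵀ)⁻¹) ^ (n - 2) * blk A I J *
              ((blk A J J)⁻¹ * (blk A J J)ᵀ) ^ (n - 2)) ∧
    (∀ I : Fin n, blk ((phiMap n m hm)^[n] A) I I = blk A I I) := by
  have hperiod (I J : Fin n) (hIJ : I ≤ J) : blk ((phiMap n m hm)^[n] A) I J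
      = (blk A I I * ((blk A I I)ᵀ)⁻¹) ^ (n - 2) * blk A I J *
          ((blk A J J)⁻¹ * (blk A J J)ᵀ) ^ (n - 2) := by
    have : NeZero n := ⟨I.pos.ne'⟩
    have hcast (K : Fin n) : (((K : ℕ) + n : ℕ) : Fin n) = K := by
      rw [Nat.cast_add, Fin.natCast_self, add_zero, Fin.cast_val_eq_self]
    rw [blk_iterate_phiMap hm A (fun K L h => blk_eq_zero_of_isBUT hm hA h) hdiag le_rfl, extBlk,
      if_neg (by simpa using hIJ), if_neg (by omega), if_neg (by omega), hcast, hcast]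
  refine ⟨hperiod, fun I => ?_⟩
  rw [hperiod I I le_rfl, pow_mul_transpose_nonsing_inv_mul_mul_pow (hdiag I)]

/-- the `n`-fold iterate of `Φ = β_{n−1,n} ∘ ⋯ ∘ β_{1,2}` acts on the
blocks of a block-upper-triangular matrix `A` by
`(Φⁿ(A))_{I,J} = (A_{I,I}·A_{I,I}^{−T})^{n−2}·A_{I,J}·(A_{J,J}⁻¹·A_{J,J}ᵀ)^{n−2}`;
in particular `(Φⁿ(A))_{I,I} = A_{I,I}` for every `I`. -/
theorem total_braid_action (n m : ℕ) (hn : 2 ≤ n) (hm : 1 ≤ m)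
    (A : Matrix (Fin (n * m)) (Fin (n * m)) ℂ) (hA : IsBUT n m A)
    (hdiag : ∀ J : Fin n, IsUnit (blk A J J).det) :
    (∀ I J : Fin n, I ≤ J →
        blk ((phiMap n m hm)^[n] A) I J
          = (blk A I I * ((blk A I I)ᵀ)⁻¹) ^ (n - 2) * blk A I J *
              ((blk A J J)⁻¹ * (blk A J J)ᵀ) ^ (n - 2)) ∧
    (∀ I : Fin n, blk ((phiMap n m hm)^[n] A) I I = blk A I I) :=
  total_braid_action_general n m hm A hA hdiag
end
end
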